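/- Let A = (a_{cv}) be an m×n real matrix with nonnegative entries and no all-zero column, let x ∈ ℝ^n_{≥0}, and let y = Ax. For every iteration ℓ ≥ 1 and every variable node v: M^{(ℓ)}_v = x_v if and only if there exists c ∈ N(v) such that μ^{(ℓ−1)}_{v'} = x_{v'} for every v' ∈ N(c) with v' ≠ v. -/

import Mathlib

/-!
Every message of the IPA is `x_v` plus a nonnegative combination of the errors of the other
neighbours: by induction the bounds sandwich `x`, so the upper message `M_{c→v}` equals `x_v`
plus `Σ_{v' ≠ v} a_{cv'} (x_{v'} - μ_{v'}) / a_{cv} ≥ x_v`, with equality exactly when all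
these errors vanish. The minimum over the finitely many checks `c ∈ N(v)` is therefore `x_v`
iff one of them attains it.
-/


open scoped Classical
open Finset

variable {C V : Type*} [Fintype C] [Fintype V]

/-- The IPA lower/upper bounds `(μ^{(ℓ)}, M^{(ℓ)})` computed from measurement
matrix `A` and measurement vector `y`. -/
noncomputable def ipa (A : C → V → ℝ) (y : C → ℝ) : ℕ → (V → ℝ) × (V → ℝ)
  | 0 => (fun _ => 0,
      fun v => sInf {r : ℝ | ∃ c, A c v ≠ 0 ∧ r = y c / A c v})
  | ℓ + 1 =>
      (fun v => sSup {r : ℝ | ∃ c, A c v ≠ 0 ∧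
          r = max 0 ((y c - ∑ v' ∈ Finset.univ.filter (fun v' => v' ≠ v),
              A c v' * (ipa A y ℓ).2 v') / A c v)},
       fun v => sInf {r : ℝ | ∃ c, A c v ≠ 0 ∧
          r = (y c - ∑ v' ∈ Finset.univ.filter (fun v' => v' ≠ v),
              A c v' * (ipa A y ℓ).1 v') / A c v})

/-- IPA lower bound `μ^{(ℓ)}_v`. -/
noncomputable def ipaMu (A : C → V → ℝ) (y : C → ℝ) (ℓ : ℕ) (v : V) : ℝ := (ipa A y ℓ).1 v

/-- IPA upper bound `M^{(ℓ)}_v`. -/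
noncomputable def ipaM (A : C → V → ℝ) (y : C → ℝ) (ℓ : ℕ) (v : V) : ℝ := (ipa A y ℓ).2 v

/-- Neighbourhood `N(v)` of a variable node. -/
noncomputable def Nv (A : C → V → ℝ) (v : V) : Finset C := Finset.univ.filter fun c => A c v ≠ 0

/-- Neighbourhood `N(c)` of a measurement node. -/
noncomputable def Nc (A : C → V → ℝ) (c : C) : Finset V := Finset.univ.filter fun v => A c v ≠ 0

/-- Neighbourhood `N(T)` of a set of variable nodes. -/
noncomputable def NT (A : C → V → ℝ) (T : Finset V) : Finset C :=
  Finset.univ.filter fun c => ∃ v ∈ T, A c v ≠ 0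

/-- `N_T(c) = N(c) ∩ T`. -/
noncomputable def NTc (A : C → V → ℝ) (T : Finset V) (c : C) : Finset V :=
  T.filter fun v => A c v ≠ 0

/-- A stopping set: every neighbouring measurement node is connected at least twice to `T`. -/
def StoppingSet (A : C → V → ℝ) (T : Finset V) : Prop :=
  ∀ c ∈ NT A T, 2 ≤ (NTc A T c).card

/-- The set `S` of variable nodes outside `T` connected only to `N(T)`. -/
noncomputable def Sset (A : C → V → ℝ) (T : Finset V) : Finset V :=
  Finset.univ.filter fun v => v ∉ T ∧ ∀ c, A c v ≠ 0 → c ∈ NT A T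

/-- The termatiko condition on a set `T` of variable nodes. -/
def TermatikoCond (A : C → V → ℝ) (T : Finset V) : Prop :=
  ∀ c ∈ NT A T,
    (∃ v ∈ Sset A T, A c v ≠ 0) ∨
    2 ≤ ((NTc A T c).filter fun v => ∀ c', A c' v ≠ 0 → 2 ≤ (NTc A T c').card).card

/-- Real-valued indicator vector `1_T` of a set of variable nodes. -/
noncomputable def indVec (T : Finset V) : V → ℝ := fun v => if v ∈ T then 1 else 0

/-- The measurement vector `A · 1_T`. -/
noncomputable def measT (A : C → V → ℝ) (T : Finset V) : C → ℝ :=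
  fun c => ∑ v, A c v * indVec T v

/-- `T` is a termatiko set of `A`: the IPA run on `A · 1_T` keeps all lower bounds at zero. -/
def IsTermatiko (A : C → V → ℝ) (T : Finset V) : Prop :=
  ∀ (ℓ : ℕ) (v : V), ipaMu A (measT A T) ℓ v = 0

/-- `A` is a binary (0/1) matrix. -/
def Binary (A : C → V → ℝ) : Prop := ∀ c v, A c v = 0 ∨ A c v = 1

/-- `A` has no all-zero column. -/
def NoZeroCol (A : C → V → ℝ) : Prop := ∀ v, ∃ c, A c v ≠ 0

/-- `A` has nonnegative entries. -/
def MatNonneg (A : C → V → ℝ) : Prop := ∀ c v, 0 ≤ A c v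

section InfSup

variable {ι : Type*} {p : ι → Prop} {f : ι → ℝ} {a : ℝ}

lemma le_sInf_setOf_exists (hne : ∃ i, p i) (h : ∀ i, p i → a ≤ f i) :
    a ≤ sInf {r | ∃ i, p i ∧ r = f i} := by
  obtain ⟨i, hi⟩ := hne
  refine le_csInf ⟨f i, i, hi, rfl⟩ ?_
  rintro r ⟨j, hj, rfl⟩
  exact h j hj

lemma sSup_setOf_exists_le (hne : ∃ i, p i) (h : ∀ i, p i → f i ≤ a) :
    sSup {r | ∃ i, p i ∧ r = f i} ≤ a := by
  obtain ⟨i, hi⟩ := hne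
  refine csSup_le ⟨f i, i, hi, rfl⟩ ?_
  rintro r ⟨j, hj, rfl⟩
  exact h j hj

lemma sInf_setOf_exists_eq_iff [Finite ι] (hne : ∃ i, p i) (h : ∀ i, p i → a ≤ f i) :
    sInf {r | ∃ i, p i ∧ r = f i} = a ↔ ∃ i, p i ∧ f i = a := by
  have hfin : {r | ∃ i, p i ∧ r = f i}.Finite :=
    (Set.finite_range f).subset fun r ⟨i, _, hr⟩ => ⟨i, hr.symm⟩
  have hS : {r | ∃ i, p i ∧ r = f i}.Nonempty := let ⟨i, hi⟩ := hne; ⟨f i, i, hi, rfl⟩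
  constructor
  · intro hinf
    obtain ⟨j, hj, hfj⟩ := hS.csInf_mem hfin
    exact ⟨j, hj, hfj ▸ hinf⟩
  · rintro ⟨j, hj, rfl⟩
    exact le_antisymm (csInf_le hfin.bddBelow ⟨j, hj, rfl⟩) (le_sInf_setOf_exists hne h)

end InfSup

section Ipa

omit [Fintype C]

/-- The value of `v` that check `c` forces when the other variables take the values `z`:
the IPA sends `ipaMsg A y μ c v` as upper and `max 0 (ipaMsg A y M c v)` as lower message. -/
noncomputable def ipaMsg (A : C → V → ℝ) (y : C → ℝ) (z : V → ℝ) (c : C) (v : V) : ℝ :=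
  (y c - ∑ v' ∈ univ.filter (fun v' => v' ≠ v), A c v' * z v') / A c v

variable {A : C → V → ℝ} {y : C → ℝ} {x z : V → ℝ} {c : C} {v : V}

lemma ipaMsg_eq_add (hy : y c = ∑ v', A c v' * x v') (hc : A c v ≠ 0) :
    ipaMsg A y z c v =
      x v + (∑ v' ∈ univ.filter (fun v' => v' ≠ v), A c v' * (x v' - z v')) / A c v := by
  have hsplit : y c - ∑ v' ∈ univ.erase v, A c v' * z v'
      = A c v * x v + ∑ v' ∈ univ.erase v, A c v' * (x v' - z v') := by
    rw [hy, ← add_sum_erase _ _ (mem_univ v), add_sub_assoc, ← sum_sub_distrib]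
    simp only [mul_sub]
  rw [ipaMsg, filter_ne', hsplit, add_div, mul_div_cancel_left₀ _ hc]

lemma le_ipaMsg (hA : MatNonneg A) (hy : y c = ∑ v', A c v' * x v') (hc : A c v ≠ 0)
    (hz : z ≤ x) : x v ≤ ipaMsg A y z c v := by
  rw [ipaMsg_eq_add hy hc, le_add_iff_nonneg_right]
  exact div_nonneg (sum_nonneg fun i _ => mul_nonneg (hA c i) (sub_nonneg.2 (hz i))) (hA c v)

lemma ipaMsg_le (hA : MatNonneg A) (hy : y c = ∑ v', A c v' * x v') (hc : A c v ≠ 0)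
    (hz : x ≤ z) : ipaMsg A y z c v ≤ x v := by
  rw [ipaMsg_eq_add hy hc, add_le_iff_nonpos_right]
  exact div_nonpos_of_nonpos_of_nonneg
    (sum_nonpos fun i _ => mul_nonpos_of_nonneg_of_nonpos (hA c i) (sub_nonpos.2 (hz i)))
    (hA c v)

lemma ipaMsg_eq_iff (hA : MatNonneg A) (hy : y c = ∑ v', A c v' * x v') (hc : A c v ≠ 0)
    (hz : z ≤ x) :
    ipaMsg A y z c v = x v ↔ ∀ v', A c v' ≠ 0 → v' ≠ v → z v' = x v' := by
  have hterm : ∀ i ∈ univ.filter (fun v' => v' ≠ v), 0 ≤ A c i * (x i - z i) :=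
    fun i _ => mul_nonneg (hA c i) (sub_nonneg.2 (hz i))
  rw [ipaMsg_eq_add hy hc, add_eq_left, div_eq_zero_iff, or_iff_left hc,
    sum_eq_zero_iff_of_nonneg hterm]
  simp only [mem_filter, mem_univ, true_and, mul_eq_zero, sub_eq_zero, eq_comm (a := x _)]
  exact forall_congr' fun v' => ⟨fun h hA' hne => (h hne).resolve_left hA',
    fun h hne => or_iff_not_imp_left.2 fun hA' => h hA' hne⟩

variable {ℓ : ℕ}

lemma ipaM_zero : ipaM A y 0 v = sInf {r | ∃ c, A c v ≠ 0 ∧ r = ipaMsg A y 0 c v} := by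
  simp [ipaM, ipa, ipaMsg]

lemma ipaMu_succ :
    ipaMu A y (ℓ + 1) v =
      sSup {r | ∃ c, A c v ≠ 0 ∧ r = max 0 (ipaMsg A y (ipaM A y ℓ) c v)} := rfl

lemma ipaM_succ :
    ipaM A y (ℓ + 1) v = sInf {r | ∃ c, A c v ≠ 0 ∧ r = ipaMsg A y (ipaMu A y ℓ) c v} := rfl

lemma ipaMu_le_and_le_ipaM (hA : MatNonneg A) (hcol : NoZeroCol A) (hx : 0 ≤ x)
    (hy : ∀ c, y c = ∑ v, A c v * x v) (ℓ : ℕ) : ipaMu A y ℓ ≤ x ∧ x ≤ ipaM A y ℓ := by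
  induction ℓ with
  | zero =>
    refine ⟨hx, fun v => ?_⟩
    rw [ipaM_zero]
    exact le_sInf_setOf_exists (hcol v) fun c hc => le_ipaMsg hA (hy c) hc hx
  | succ ℓ ih =>
    refine ⟨fun v => ?_, fun v => ?_⟩
    · rw [ipaMu_succ]
      exact sSup_setOf_exists_le (hcol v) fun c hc =>
        max_le (hx v) (ipaMsg_le hA (hy c) hc ih.2)
    · rw [ipaM_succ]
      exact le_sInf_setOf_exists (hcol v) fun c hc => le_ipaMsg hA (hy c) hc ih.1

end Ipa

/-- for `ℓ ≥ 1`, the upper bound reaches `x_v` iff some neighbour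
`c` has all other neighbours' lower bounds exact at iteration `ℓ-1`. -/
theorem ipa_upper_exact_iff {m n : ℕ} (A : Fin m → Fin n → ℝ)
    (hA : MatNonneg A) (hcol : NoZeroCol A)
    (x : Fin n → ℝ) (hx : ∀ v, 0 ≤ x v)
    (y : Fin m → ℝ) (hy : ∀ c, y c = ∑ v, A c v * x v) :
    ∀ (ℓ : ℕ) (v : Fin n),
      ipaM A y (ℓ + 1) v = x v ↔
        ∃ c, A c v ≠ 0 ∧ ∀ v', A c v' ≠ 0 → v' ≠ v → ipaMu A y ℓ v' = x v' := by
  intro ℓ v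
  have hμ : ipaMu A y ℓ ≤ x := (ipaMu_le_and_le_ipaM hA hcol hx hy ℓ).1
  rw [ipaM_succ, sInf_setOf_exists_eq_iff (hcol v) fun c hc => le_ipaMsg hA (hy c) hc hμ]
  exact exists_congr fun c => and_congr_right fun hc => ipaMsg_eq_iff hA (hy c) hc hμ
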